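/- arXiv:2505.09581 — 3 statements merged into one kernel-verified Lean document; each statement's English description precedes it below -/
import Mathlib

section
/- Define φ(p) = f_L(p) + f_R(p) + v_R - v_L where each f_Z is the piecewise function equal to (p - p_Z)sqrt(A_Z/(p+B_Z)) for p > p_Z and (2c_Z/(γ_Z-1))((p/p_Z)^{(γ_Z-1)/(2γ_Z)} - 1) for 0 < p ≤ p_Z. Then φ is continuous and strictly increasing on (0, ∞), and hence has at most one root p* > 0. -/
/-!
Each wave curve `f_Z` is strictly increasing. On the rarefaction branch this is monotonicity of
`p ↦ p ^ α` with `α > 0`. On the shock branch, writing `s = √(p + B)`, one has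
`(p - p₀) √(A / (p + B)) = √A (s - (p₀ + B) / s)`, a sum of two increasing functions of `s`.
Both branches vanish at `p = p₀`, so the piecewise function is continuous and strictly increasing,
and hence so is `φ`.
-/

open Set

noncomputable section

namespace RiemannProblem

def shockBranch (A B p₀ p : ℝ) : ℝ := (p - p₀) * √(A / (p + B))

def rarefactionBranch (C α p₀ p : ℝ) : ℝ := C * ((p / p₀) ^ α - 1)

def waveCurve (A B C α p₀ p : ℝ) : ℝ :=
  if p₀ < p then shockBranch A B p₀ p else rarefactionBranch C α p₀ p

variable {A B C α p₀ : ℝ}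

theorem shockBranch_self : shockBranch A B p₀ p₀ = 0 := by
  simp [shockBranch]

theorem rarefactionBranch_self (hp₀ : p₀ ≠ 0) : rarefactionBranch C α p₀ p₀ = 0 := by
  simp [rarefactionBranch, div_self hp₀]

theorem shockBranch_eq {p : ℝ} (hA : 0 ≤ A) (hp : 0 < p + B) :
    shockBranch A B p₀ p = √A * (√(p + B) - (p₀ + B) / √(p + B)) := by
  have hs : 0 < √(p + B) := Real.sqrt_pos.2 hp
  rw [shockBranch, Real.sqrt_div hA]
  field_simp
  rw [Real.sq_sqrt hp.le]
  ring

theorem continuousOn_shockBranch : ContinuousOn (shockBranch A B p₀) (Ioi (-B)) := by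
  refine (continuousOn_id.sub continuousOn_const).mul
    (Real.continuous_sqrt.comp_continuousOn (continuousOn_const.div ?_ ?_))
  · exact continuousOn_id.add continuousOn_const
  · intro p hp
    exact (neg_lt_iff_pos_add.1 hp).ne'

theorem strictMonoOn_shockBranch (hA : 0 < A) (hB : 0 ≤ p₀ + B) :
    StrictMonoOn (shockBranch A B p₀) (Ioi (-B)) := by
  intro x hx y hy hxy
  have hxB : 0 < x + B := neg_lt_iff_pos_add.1 hx
  have hyB : 0 < y + B := neg_lt_iff_pos_add.1 hy
  have hs : 0 < √(x + B) := Real.sqrt_pos.2 hxB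
  have hst : √(x + B) < √(y + B) := Real.sqrt_lt_sqrt hxB.le (by linarith)
  have hdiv : (p₀ + B) / √(y + B) ≤ (p₀ + B) / √(x + B) :=
    div_le_div_of_nonneg_left hB hs hst.le
  rw [shockBranch_eq hA.le hxB, shockBranch_eq hA.le hyB]
  exact mul_lt_mul_of_pos_left (by linarith) (Real.sqrt_pos.2 hA)

theorem continuous_rarefactionBranch (hα : 0 ≤ α) : Continuous (rarefactionBranch C α p₀) :=
  continuous_const.mul (((Real.continuous_rpow_const hα).comp
    (continuous_id.div_const p₀)).sub continuous_const)

theorem strictMonoOn_rarefactionBranch (hC : 0 < C) (hα : 0 < α) (hp₀ : 0 < p₀) :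
    StrictMonoOn (rarefactionBranch C α p₀) (Ici 0) := by
  intro x hx y _ hxy
  have hpow : (x / p₀) ^ α < (y / p₀) ^ α :=
    Real.rpow_lt_rpow (div_nonneg hx hp₀.le) (div_lt_div_of_pos_right hxy hp₀) hα
  exact mul_lt_mul_of_pos_left (sub_lt_sub_right hpow 1) hC

theorem continuous_waveCurve (hB : 0 < p₀ + B) (hα : 0 ≤ α) (hp₀ : p₀ ≠ 0) :
    Continuous (waveCurve A B C α p₀) := by
  refine continuous_if ?_ ?_ (continuous_rarefactionBranch hα).continuousOn
  · intro p hp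
    rw [show {p : ℝ | p₀ < p} = Ioi p₀ from rfl, frontier_Ioi, mem_singleton_iff] at hp
    rw [hp, shockBranch_self, rarefactionBranch_self hp₀]
  · rw [show {p : ℝ | p₀ < p} = Ioi p₀ from rfl, closure_Ioi]
    exact continuousOn_shockBranch.mono fun p (hp : p₀ ≤ p) => show -B < p by linarith

theorem strictMonoOn_waveCurve (hA : 0 < A) (hB : 0 < p₀ + B) (hC : 0 < C) (hα : 0 < α)
    (hp₀ : 0 < p₀) : StrictMonoOn (waveCurve A B C α p₀) (Ici 0) := by
  have hrare : StrictMonoOn (waveCurve A B C α p₀) (Icc 0 p₀) := by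
    refine (strictMonoOn_rarefactionBranch hC hα hp₀).mono Icc_subset_Ici_self |>.congr ?_
    intro p hp
    simp [waveCurve, not_lt.2 hp.2]
  have hshock : StrictMonoOn (waveCurve A B C α p₀) (Ici p₀) := by
    refine (strictMonoOn_shockBranch hA hB.le).mono ?_ |>.congr ?_
    · exact fun p (hp : p₀ ≤ p) => show -B < p by linarith
    · intro p hp
      rcases (mem_Ici.1 hp).lt_or_eq with hlt | rfl
      · simp [waveCurve, hlt]
      · simp [waveCurve, shockBranch_self, rarefactionBranch_self hp₀.ne']
  rw [← Icc_union_Ici_eq_Ici hp₀.le]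
  exact hrare.union hshock (isGreatest_Icc hp₀.le) isLeast_Ici

def gasWaveCurve (γ ρ p₀ : ℝ) : ℝ → ℝ :=
  waveCurve (2 / ((γ + 1) * ρ)) (((γ - 1) / (γ + 1)) * p₀) (2 * √(γ * p₀ / ρ) / (γ - 1))
    ((γ - 1) / (2 * γ)) p₀

theorem continuous_gasWaveCurve {γ ρ p₀ : ℝ} (hγ : 1 < γ) (hp₀ : 0 < p₀) :
    Continuous (gasWaveCurve γ ρ p₀) := by
  have hγ' : 0 < γ - 1 := sub_pos.2 hγ
  exact continuous_waveCurve (by positivity) (by positivity) hp₀.ne'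

theorem strictMonoOn_gasWaveCurve {γ ρ p₀ : ℝ} (hγ : 1 < γ) (hρ : 0 < ρ) (hp₀ : 0 < p₀) :
    StrictMonoOn (gasWaveCurve γ ρ p₀) (Ici 0) := by
  have hγ' : 0 < γ - 1 := sub_pos.2 hγ
  exact strictMonoOn_waveCurve (by positivity) (by positivity) (by positivity) (by positivity) hp₀

end RiemannProblem

end

open RiemannProblem

/-- The function `φ(p) = f_L(p) + f_R(p) + v_R - v_L` is continuous and strictly
increasing on `(0, ∞)`, hence has at most one root `p* > 0`. -/
theorem phi_continuous_strictMono (γL γR pL pR ρL ρR vL vR : ℝ)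
    (hγL : 1 < γL) (hγR : 1 < γR)
    (hpL : 0 < pL) (hpR : 0 < pR) (hρL : 0 < ρL) (hρR : 0 < ρR) :
    let AL := 2 / ((γL + 1) * ρL)
    let BL := ((γL - 1) / (γL + 1)) * pL
    let cL := Real.sqrt (γL * pL / ρL)
    let AR := 2 / ((γR + 1) * ρR)
    let BR := ((γR - 1) / (γR + 1)) * pR
    let cR := Real.sqrt (γR * pR / ρR)
    let fL : ℝ → ℝ := fun p =>
      if pL < p then (p - pL) * Real.sqrt (AL / (p + BL))
      else (2 * cL / (γL - 1)) * ((p / pL) ^ ((γL - 1) / (2 * γL)) - 1)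
    let fR : ℝ → ℝ := fun p =>
      if pR < p then (p - pR) * Real.sqrt (AR / (p + BR))
      else (2 * cR / (γR - 1)) * ((p / pR) ^ ((γR - 1) / (2 * γR)) - 1)
    let φ : ℝ → ℝ := fun p => fL p + fR p + vR - vL
    ContinuousOn φ (Set.Ioi 0) ∧ StrictMonoOn φ (Set.Ioi 0) ∧
      ∀ p q : ℝ, 0 < p → 0 < q → φ p = 0 → φ q = 0 → p = q := by
  intro AL BL cL AR BR cR fL fR φ
  have hcont : Continuous φ :=
    (((continuous_gasWaveCurve hγL hpL).add (continuous_gasWaveCurve hγR hpR)).add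
      continuous_const).sub continuous_const
  have hmono : StrictMonoOn φ (Ioi 0) := by
    intro x hx y hy hxy
    have hL : fL x < fL y :=
      (strictMonoOn_gasWaveCurve hγL hρL hpL).mono Ioi_subset_Ici_self hx hy hxy
    have hR : fR x < fR y :=
      (strictMonoOn_gasWaveCurve hγR hρR hpR).mono Ioi_subset_Ici_self hx hy hxy
    show fL x + fR x + vR - vL < fL y + fR y + vR - vL
    linarith
  exact ⟨hcont.continuousOn, hmono, fun p q hp hq hφp hφq => hmono.injOn hp hq (hφp.trans hφq.symm)⟩
end

section
/- φ(p) = f_L(p) + f_R(p) + v_R - v_L (as in the multi-species Riemann problem) has a unique root p* > 0 if and only if v_R - v_L < 2c_L/(γ_L - 1) + 2c_R/(γ_R - 1) (the non-vacuum condition), since φ(p) → v_R - v_L - 2c_L/(γ_L-1) - 2c_R/(γ_R-1) as p → 0+ and φ(p) → +∞ as p → ∞. -/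
/-!
Each `f_Z` is continuous and strictly increasing on `(0, ∞)`: the rarefaction branch is an
increasing power of `p`, the shock branch is the square root of `(p - p_Z)² A_Z / (p + B_Z)`,
which increases for `p ≥ p_Z` and grows like `p`, and both branches vanish at `p = p_Z`.
So `φ` is continuous and strictly increasing on `(0, ∞)`, tends to `+∞`, and its limit at `0⁺`
is the value of the rarefaction branches at `p = 0`. By the intermediate value theorem `φ` has
a (necessarily unique) positive root exactly when that limit is negative.
-/

open Real Filter Set Topology

theorem existsUnique_pos_root_iff {φ : ℝ → ℝ} {L : ℝ} (hmono : StrictMonoOn φ (Ioi 0))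
    (hcont : ContinuousOn φ (Ioi 0)) (h0 : Tendsto φ (𝓝[>] 0) (𝓝 L))
    (htop : Tendsto φ atTop atTop) :
    (∃! p, 0 < p ∧ φ p = 0) ↔ L < 0 := by
  constructor
  · rintro ⟨p, ⟨hp, hroot⟩, -⟩
    have hp2 : p / 2 ∈ Ioi (0 : ℝ) := half_pos hp
    have hL : L ≤ φ (p / 2) := by
      refine le_of_tendsto h0 ?_
      filter_upwards [self_mem_nhdsWithin, Ioo_mem_nhdsGT hp2] with x hx hx'
      exact (hmono hx hp2 hx'.2).le
    linarith [hmono hp2 hp (half_lt_self hp)]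
  · intro hL
    obtain ⟨p, hp, hroot⟩ := isPreconnected_Ioi.intermediate_value_Ioi
      (le_principal_iff.2 self_mem_nhdsWithin) (le_principal_iff.2 (Ioi_mem_atTop 0))
      hcont h0 htop hL
    exact ⟨p, ⟨hp, hroot⟩, fun q ⟨hq, hq0⟩ => hmono.injOn hq hp (hq0.trans hroot.symm)⟩

section ShockBranch

variable {a A B : ℝ}

lemma sub_mul_sqrt_div_eq_sqrt {p : ℝ} (hp : a ≤ p) :
    (p - a) * √(A / (p + B)) = √((p - a) ^ 2 * (A / (p + B))) := by
  rw [sqrt_mul (sq_nonneg _), sqrt_sq (sub_nonneg.2 hp)]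

lemma strictMonoOn_sub_mul_sqrt_div (hA : 0 < A) (hB : 0 < a + B) :
    StrictMonoOn (fun p => (p - a) * √(A / (p + B))) (Ici a) := by
  intro x (hx : a ≤ x) y (hy : a ≤ y) hxy
  have hxB : 0 < x + B := by linarith
  have hyB : 0 < y + B := by linarith
  simp only [sub_mul_sqrt_div_eq_sqrt hx, sub_mul_sqrt_div_eq_sqrt hy]
  refine sqrt_lt_sqrt (by positivity) ?_
  rw [← mul_div_assoc, ← mul_div_assoc, div_lt_div_iff₀ hxB hyB]
  have hgap : 0 < (y - a) ^ 2 * (x + B) - (x - a) ^ 2 * (y + B) := by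
    have key : (y - a) ^ 2 * (x + B) - (x - a) ^ 2 * (y + B)
        = (y - x) * ((x - a) * (y - a) + (a + B) * ((x - a) + (y - a))) := by ring
    rw [key]
    exact mul_pos (sub_pos.2 hxy) (by nlinarith)
  nlinarith [mul_pos hA hgap]

lemma tendsto_sub_mul_sqrt_div_atTop (hA : 0 < A) :
    Tendsto (fun p => (p - a) * √(A / (p + B))) atTop atTop := by
  have hlin : Tendsto (fun p : ℝ => A * p / 8) atTop atTop :=
    (tendsto_id.const_mul_atTop hA).atTop_div_const (by norm_num)
  refine tendsto_atTop_mono' _ ?_ (tendsto_sqrt_atTop.comp hlin)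
  filter_upwards [eventually_ge_atTop (2 * a), eventually_gt_atTop |B|] with p hpa hpB
  have hp : 0 < p := (abs_nonneg B).trans_lt hpB
  have hpB' : 0 < p + B := by linarith [neg_abs_le B]
  rw [Function.comp_apply, sub_mul_sqrt_div_eq_sqrt (by linarith)]
  refine sqrt_le_sqrt ?_
  calc A * p / 8 = (p / 2) ^ 2 * (A / (2 * p)) := by field_simp; ring
    _ ≤ (p - a) ^ 2 * (A / (p + B)) := by
      gcongr
      · linarith
      · linarith [le_abs_self B]

end ShockBranch

/-- The function `f_Z` of the statement, with `A_Z`, `B_Z` and `c_Z` unfolded. -/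
noncomputable def waveFun (γ p₀ ρ : ℝ) (p : ℝ) : ℝ :=
  if p₀ < p then (p - p₀) * √(2 / ((γ + 1) * ρ) / (p + (γ - 1) / (γ + 1) * p₀))
  else 2 * √(γ * p₀ / ρ) / (γ - 1) * ((p / p₀) ^ ((γ - 1) / (2 * γ)) - 1)

section WaveFun

variable {γ p₀ ρ : ℝ}

lemma waveFun_of_le {p : ℝ} (hp : p ≤ p₀) :
    waveFun γ p₀ ρ p = 2 * √(γ * p₀ / ρ) / (γ - 1) * ((p / p₀) ^ ((γ - 1) / (2 * γ)) - 1) :=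
  if_neg hp.not_gt

lemma waveFun_of_ge (hp₀ : p₀ ≠ 0) {p : ℝ} (hp : p₀ ≤ p) :
    waveFun γ p₀ ρ p = (p - p₀) * √(2 / ((γ + 1) * ρ) / (p + (γ - 1) / (γ + 1) * p₀)) := by
  rcases hp.lt_or_eq with hp | rfl
  · exact if_pos hp
  · simp [waveFun, div_self hp₀]

lemma waveFun_zero (hγ : 1 < γ) (hp₀ : 0 < p₀) :
    waveFun γ p₀ ρ 0 = -(2 * √(γ * p₀ / ρ) / (γ - 1)) := by
  have he : (γ - 1) / (2 * γ) ≠ 0 := by have := sub_pos.2 hγ; positivity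
  rw [waveFun_of_le hp₀.le, zero_div, zero_rpow he]
  ring

lemma continuous_waveFun (hγ : 1 < γ) (hp₀ : 0 < p₀) : Continuous (waveFun γ p₀ ρ) := by
  have hγ' := sub_pos.2 hγ
  have hB : 0 < p₀ + (γ - 1) / (γ + 1) * p₀ := by positivity
  have hite : waveFun γ p₀ ρ = fun p => if p ≤ p₀
      then 2 * √(γ * p₀ / ρ) / (γ - 1) * ((p / p₀) ^ ((γ - 1) / (2 * γ)) - 1)
      else (p - p₀) * √(2 / ((γ + 1) * ρ) / (p + (γ - 1) / (γ + 1) * p₀)) := by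
    funext p
    simp only [waveFun, ← not_lt, ite_not]
  rw [hite]
  refine continuous_if_le continuous_id continuous_const ?_ ?_ ?_
  · exact ((continuous_rpow_const (by positivity)).comp (continuous_id.div_const p₀)
      |>.sub continuous_const |>.const_mul _).continuousOn
  · refine ContinuousOn.mul (by fun_prop) (continuousOn_const.div (by fun_prop) ?_).sqrt
    intro p (hp : p₀ ≤ p)
    exact ne_of_gt (by linarith)
  · rintro p (rfl : p = p₀)
    simp [div_self hp₀.ne']

lemma waveFun_strictMonoOn (hγ : 1 < γ) (hp₀ : 0 < p₀) (hρ : 0 < ρ) :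
    StrictMonoOn (waveFun γ p₀ ρ) (Ici 0) := by
  have hγ' := sub_pos.2 hγ
  have hrarefaction : StrictMonoOn (waveFun γ p₀ ρ) (Icc 0 p₀) := by
    rintro x ⟨hx0, hxp⟩ y ⟨-, hyp⟩ hxy
    have hc : 0 < √(γ * p₀ / ρ) := sqrt_pos.2 (by positivity)
    rw [waveFun_of_le hxp, waveFun_of_le hyp]
    gcongr
  have hshock : StrictMonoOn (waveFun γ p₀ ρ) (Ici p₀) :=
    (strictMonoOn_sub_mul_sqrt_div (by positivity) (by positivity)).congr
      fun p hp => (waveFun_of_ge hp₀.ne' hp).symm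
  simpa only [Icc_union_Ici_eq_Ici hp₀.le] using
    hrarefaction.union hshock (isGreatest_Icc hp₀.le) isLeast_Ici

lemma tendsto_waveFun_atTop (hγ : 1 < γ) (hp₀ : 0 < p₀) (hρ : 0 < ρ) :
    Tendsto (waveFun γ p₀ ρ) atTop atTop :=
  (tendsto_sub_mul_sqrt_div_atTop (by positivity)).congr' <|
    (eventually_ge_atTop p₀).mono fun _ hp => (waveFun_of_ge hp₀.ne' hp).symm

end WaveFun

/-- `φ` has a unique root `p* > 0` iff the non-vacuum condition
`v_R - v_L < 2c_L/(γ_L-1) + 2c_R/(γ_R-1)` holds, since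
`φ(p) → v_R - v_L - 2c_L/(γ_L-1) - 2c_R/(γ_R-1)` as `p → 0⁺` and
`φ(p) → +∞` as `p → ∞`. -/
theorem phi_unique_root_iff_nonvacuum (γL γR pL pR ρL ρR vL vR : ℝ)
    (hγL : 1 < γL) (hγR : 1 < γR)
    (hpL : 0 < pL) (hpR : 0 < pR) (hρL : 0 < ρL) (hρR : 0 < ρR) :
    let AL := 2 / ((γL + 1) * ρL)
    let BL := ((γL - 1) / (γL + 1)) * pL
    let cL := Real.sqrt (γL * pL / ρL)
    let AR := 2 / ((γR + 1) * ρR)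
    let BR := ((γR - 1) / (γR + 1)) * pR
    let cR := Real.sqrt (γR * pR / ρR)
    let fL : ℝ → ℝ := fun p =>
      if pL < p then (p - pL) * Real.sqrt (AL / (p + BL))
      else (2 * cL / (γL - 1)) * ((p / pL) ^ ((γL - 1) / (2 * γL)) - 1)
    let fR : ℝ → ℝ := fun p =>
      if pR < p then (p - pR) * Real.sqrt (AR / (p + BR))
      else (2 * cR / (γR - 1)) * ((p / pR) ^ ((γR - 1) / (2 * γR)) - 1)
    let φ : ℝ → ℝ := fun p => fL p + fR p + vR - vL
    Filter.Tendsto φ (nhdsWithin 0 (Set.Ioi 0))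
      (nhds (vR - vL - 2 * cL / (γL - 1) - 2 * cR / (γR - 1))) ∧
    Filter.Tendsto φ Filter.atTop Filter.atTop ∧
    ((∃! p : ℝ, 0 < p ∧ φ p = 0) ↔
      vR - vL < 2 * cL / (γL - 1) + 2 * cR / (γR - 1)) := by
  intro AL BL cL AR BR cR fL fR φ
  have hφ : φ = fun p => waveFun γL pL ρL p + waveFun γR pR ρR p + vR - vL := rfl
  have hcont : Continuous φ := by
    have := continuous_waveFun (ρ := ρL) hγL hpL
    have := continuous_waveFun (ρ := ρR) hγR hpR
    rw [hφ]
    fun_prop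
  have hmono : StrictMonoOn φ (Ioi 0) := fun x hx y hy hxy => by
    have hL := (waveFun_strictMonoOn hγL hpL hρL).mono Ioi_subset_Ici_self hx hy hxy
    have hR := (waveFun_strictMonoOn hγR hpR hρR).mono Ioi_subset_Ici_self hx hy hxy
    simp only [hφ]
    linarith
  have hφ0 : φ 0 = vR - vL - 2 * cL / (γL - 1) - 2 * cR / (γR - 1) := by
    simp only [hφ, waveFun_zero hγL hpL, waveFun_zero hγR hpR]
    ring
  have h0 : Tendsto φ (𝓝[>] 0) (𝓝 (vR - vL - 2 * cL / (γL - 1) - 2 * cR / (γR - 1))) :=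
    hφ0 ▸ hcont.continuousAt.continuousWithinAt.tendsto
  have htop : Tendsto φ atTop atTop := by
    simpa only [hφ, sub_eq_add_neg] using tendsto_atTop_add_const_right _ (-vL) <|
      tendsto_atTop_add_const_right _ vR <|
        (tendsto_waveFun_atTop hγL hpL hρL).atTop_add_atTop (tendsto_waveFun_atTop hγR hpR hρR)
  refine ⟨h0, htop, ?_⟩
  rw [existsUnique_pos_root_iff hmono hcont.continuousOn h0 htop]
  constructor <;> intro h <;> linarith
end

section
/- The extreme wave speeds in the multi-species Riemann problem are well ordered: for any p* > 0, λ_L^-(p*) ≤ λ_L^+(p*) and λ_R^-(p*) ≤ λ_R^+(p*), where λ_L^-(p*) = v_L - c_L sqrt(1 + ((γ_L+1)/(2γ_L)) max((p*-p_L)/p_L, 0)), λ_L^+(p*) equals v_L - f_L(p*) - c_L (p*/p_L)^{(γ_L-1)/(2γ_L)} if p* < p_L and λ_L^-(p*) otherwise, and symmetrically on the right. -/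
/-! For `p* ≥ p` the two speeds coincide. For `p* < p` the shock factor
`sqrt (1 + k · max (…) 0)` is `1`, so the outer speed is `v ∓ c`, while the rarefaction speed is
`v ∓ (f(p*) + c r^e)` with `r = p*/p < 1` and `e ≥ 0`; then `r^e ≤ 1` gives both
`f(p*) = 2c/(γ-1) (r^e - 1) ≤ 0` and `c r^e ≤ c`. -/

lemma rarefaction_jump_add_le (γ r c : ℝ) (hγ : 1 < γ) (hr₀ : 0 ≤ r) (hr₁ : r ≤ 1)
    (hc : 0 ≤ c) :
    2 * c / (γ - 1) * (r ^ ((γ - 1) / (2 * γ)) - 1) + c * r ^ ((γ - 1) / (2 * γ)) ≤ c := by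
  have hx : r ^ ((γ - 1) / (2 * γ)) ≤ 1 :=
    Real.rpow_le_one hr₀ hr₁ (div_nonneg (by linarith) (by linarith))
  have hjump : 2 * c / (γ - 1) * (r ^ ((γ - 1) / (2 * γ)) - 1) ≤ 0 :=
    mul_nonpos_of_nonneg_of_nonpos (div_nonneg (by linarith) (by linarith)) (by linarith)
  linarith [mul_le_of_le_one_right hc hx]

lemma sqrt_one_add_mul_max_div_eq_one {p ps : ℝ} (k : ℝ) (hp : 0 < p) (hps : ps ≤ p) :
    Real.sqrt (1 + k * max ((ps - p) / p) 0) = 1 := by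
  rw [max_eq_right (div_nonpos_of_nonpos_of_nonneg (by linarith) hp.le)]
  simp

theorem wave_speeds_ordered_general (γL γR pL pR ρL ρR vL vR : ℝ)
    (hγL : 1 < γL) (hγR : 1 < γR)
    (hpL : 0 < pL) (hpR : 0 < pR) :
    let AL := 2 / ((γL + 1) * ρL)
    let BL := ((γL - 1) / (γL + 1)) * pL
    let cL := Real.sqrt (γL * pL / ρL)
    let AR := 2 / ((γR + 1) * ρR)
    let BR := ((γR - 1) / (γR + 1)) * pR
    let cR := Real.sqrt (γR * pR / ρR)
    let fL : ℝ → ℝ := fun p =>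
      if pL < p then (p - pL) * Real.sqrt (AL / (p + BL))
      else (2 * cL / (γL - 1)) * ((p / pL) ^ ((γL - 1) / (2 * γL)) - 1)
    let fR : ℝ → ℝ := fun p =>
      if pR < p then (p - pR) * Real.sqrt (AR / (p + BR))
      else (2 * cR / (γR - 1)) * ((p / pR) ^ ((γR - 1) / (2 * γR)) - 1)
    let lamLm : ℝ → ℝ := fun ps =>
      vL - cL * Real.sqrt (1 + ((γL + 1) / (2 * γL)) * max ((ps - pL) / pL) 0)
    let lamLp : ℝ → ℝ := fun ps =>
      if ps < pL then vL - fL ps - cL * (ps / pL) ^ ((γL - 1) / (2 * γL))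
      else lamLm ps
    let lamRp : ℝ → ℝ := fun ps =>
      vR + cR * Real.sqrt (1 + ((γR + 1) / (2 * γR)) * max ((ps - pR) / pR) 0)
    let lamRm : ℝ → ℝ := fun ps =>
      if ps < pR then vR + fR ps + cR * (ps / pR) ^ ((γR - 1) / (2 * γR))
      else lamRp ps
    ∀ ps : ℝ, 0 < ps → lamLm ps ≤ lamLp ps ∧ lamRm ps ≤ lamRp ps := by
  intro AL BL cL AR BR cR fL fR lamLm lamLp lamRp lamRm ps hps
  constructor
  · by_cases h : ps < pL
    · simp only [lamLm, lamLp, fL, if_pos h, if_neg (not_lt.2 h.le),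
        sqrt_one_add_mul_max_div_eq_one _ hpL h.le, mul_one]
      have := rarefaction_jump_add_le γL (ps / pL) cL hγL (by positivity)
        ((div_le_one hpL).2 h.le) (Real.sqrt_nonneg _)
      linarith
    · simp only [lamLp, if_neg h, le_refl]
  · by_cases h : ps < pR
    · simp only [lamRp, lamRm, fR, if_pos h, if_neg (not_lt.2 h.le),
        sqrt_one_add_mul_max_div_eq_one _ hpR h.le, mul_one]
      have := rarefaction_jump_add_le γR (ps / pR) cR hγR (by positivity)
        ((div_le_one hpR).2 h.le) (Real.sqrt_nonneg _)
      linarith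
    · simp only [lamRm, if_neg h, le_refl]

/-- The extreme wave speeds in the multi-species Riemann problem are well
ordered: `λ_L^- ≤ λ_L^+` and `λ_R^- ≤ λ_R^+` for any `p* > 0`. -/
theorem wave_speeds_ordered (γL γR pL pR ρL ρR vL vR : ℝ)
    (hγL : 1 < γL) (hγR : 1 < γR)
    (hpL : 0 < pL) (hpR : 0 < pR) (hρL : 0 < ρL) (hρR : 0 < ρR) :
    let AL := 2 / ((γL + 1) * ρL)
    let BL := ((γL - 1) / (γL + 1)) * pL
    let cL := Real.sqrt (γL * pL / ρL)
    let AR := 2 / ((γR + 1) * ρR)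
    let BR := ((γR - 1) / (γR + 1)) * pR
    let cR := Real.sqrt (γR * pR / ρR)
    let fL : ℝ → ℝ := fun p =>
      if pL < p then (p - pL) * Real.sqrt (AL / (p + BL))
      else (2 * cL / (γL - 1)) * ((p / pL) ^ ((γL - 1) / (2 * γL)) - 1)
    let fR : ℝ → ℝ := fun p =>
      if pR < p then (p - pR) * Real.sqrt (AR / (p + BR))
      else (2 * cR / (γR - 1)) * ((p / pR) ^ ((γR - 1) / (2 * γR)) - 1)
    let lamLm : ℝ → ℝ := fun ps =>
      vL - cL * Real.sqrt (1 + ((γL + 1) / (2 * γL)) * max ((ps - pL) / pL) 0)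
    let lamLp : ℝ → ℝ := fun ps =>
      if ps < pL then vL - fL ps - cL * (ps / pL) ^ ((γL - 1) / (2 * γL))
      else lamLm ps
    let lamRp : ℝ → ℝ := fun ps =>
      vR + cR * Real.sqrt (1 + ((γR + 1) / (2 * γR)) * max ((ps - pR) / pR) 0)
    let lamRm : ℝ → ℝ := fun ps =>
      if ps < pR then vR + fR ps + cR * (ps / pR) ^ ((γR - 1) / (2 * γR))
      else lamRp ps
    ∀ ps : ℝ, 0 < ps → lamLm ps ≤ lamLp ps ∧ lamRm ps ≤ lamRp ps :=
  wave_speeds_ordered_general γL γR pL pR ρL ρR vL vR hγL hγR hpL hpR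
end
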